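/- arXiv:1709.04489 — 4 statements merged into one kernel-verified Lean document; each statement's English description precedes it below -/
import Mathlib

section
/- Let G be a group, k a field of characteristic zero, H a finite-dimensional k-linear representation of G, V ⊆ H a G-submodule of dimension m ≥ 1, and suppose there exists a G-equivariant linear map s : Λ^m H → Λ^m V splitting the inclusion Λ^m V ↪ Λ^m H. Then the inclusion V ↪ H admits a G-equivariant splitting H → V. -/
/-!
Choose a basis `e` of `V` and put `ω = e₁ ∧ ⋯ ∧ eₘ`. Since `s` takes values in the line `k ω`,
`s x = c x • ω` for a linear form `c`, and `F = c ∘ ιMulti` is an alternating `m`-form on `H` with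
`F e = 1`. Because `s` commutes with `Λᵐ (ρ g)`, which acts on the line by a scalar `δ g`, one has
`F ∘ ρ g = δ g • F`. Cramer's rule `π h = ∑ᵣ F (e with h in slot r) • eᵣ` is then a projection
onto `V` whose kernel `{x | F (x, v₂, …, vₘ) = 0 for all vᵢ ∈ V}` is stable under every `ρ g`.
As `V` is stable too, `π` commutes with every `ρ g`.
-/

/-- The image of `Λ^m V` inside `Λ^m H` (viewed inside the exterior algebra of `H`). -/
noncomputable def exteriorPowerLine {k H : Type*} [Field k] [AddCommGroup H] [Module k H]
    (m : ℕ) (V : Submodule k H) : Submodule k (ExteriorAlgebra k H) :=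
  Submodule.map (ExteriorAlgebra.map V.subtype).toLinearMap (⋀[k]^m V)

open ExteriorAlgebra in
lemma exteriorAlgebra_map_mem_exteriorPower {k H : Type*} [Field k] [AddCommGroup H]
    [Module k H] (f : H →ₗ[k] H) (m : ℕ) {x} (hx : x ∈ ⋀[k]^m H) :
    ExteriorAlgebra.map f x ∈ ⋀[k]^m H := by
  have h : Submodule.map (ExteriorAlgebra.map f).toLinearMap
      ((LinearMap.range (ι k : H →ₗ[k] ExteriorAlgebra k H)) ^ m) ≤
      (LinearMap.range (ι k : H →ₗ[k] ExteriorAlgebra k H)) ^ m := by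
    rw [Submodule.map_pow]
    gcongr
    rintro y ⟨z, ⟨w, rfl⟩, rfl⟩
    exact ⟨f w, (map_apply_ι f w).symm⟩
  exact h ⟨x, hx, rfl⟩

/-- The endomorphism `Λ^m f` of `Λ^m H` induced by `f : H → H`. -/
noncomputable def exteriorPowerMap {k H : Type*} [Field k] [AddCommGroup H] [Module k H]
    (f : H →ₗ[k] H) (m : ℕ) : (⋀[k]^m H) →ₗ[k] (⋀[k]^m H) :=
  (ExteriorAlgebra.map f).toLinearMap.restrict
    (fun _ hx => exteriorAlgebra_map_mem_exteriorPower f m hx)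

open Function

namespace AlternatingMap

theorem map_eq_det_smul {R M N ι : Type*} [CommRing R] [AddCommGroup M] [Module R M]
    [AddCommGroup N] [Module R N] [Fintype ι] [DecidableEq ι]
    (f : M [⋀^ι]→ₗ[R] N) (e : Module.Basis ι R M) (v : ι → M) : f v = e.det v • f e := by
  suffices f = e.det.smulRight (f e) from congr($this v)
  refine e.ext_alternating fun τ hτ => ?_
  let σ : Equiv.Perm ι := Equiv.ofBijective τ (Finite.injective_iff_bijective.mp hτ)
  change f (e ∘ σ) = e.det.smulRight (f e) (e ∘ σ)
  simp [map_perm, Module.Basis.det_self]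

variable {R M N : Type*} [CommRing R] [AddCommGroup M] [Module R M] [AddCommGroup N]
  [Module R N] {n : ℕ}

theorem exists_map_vecCons_eq_units_smul_map_update (F : M [⋀^Fin (n + 1)]→ₗ[R] N)
    (u : Fin (n + 1) → M) {τ : Fin n → Fin (n + 1)} (hτ : Injective τ) {r : Fin (n + 1)}
    (hr : r ∉ Set.range τ) :
    ∃ ε : ℤˣ, ∀ x, F (Matrix.vecCons x (u ∘ τ)) = ε • F (update u r x) := by
  have hσ : Injective (Fin.cons r τ : Fin (n + 1) → Fin (n + 1)) :=
    Fin.cons_injective_iff.mpr ⟨hr, hτ⟩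
  let σ := Equiv.ofBijective _ (Finite.injective_iff_bijective.mp hσ)
  refine ⟨Equiv.Perm.sign σ, fun x => ?_⟩
  have hcomp : Matrix.vecCons x (u ∘ τ) = update u r x ∘ σ := by
    refine Fin.cases ?_ (fun j => ?_) |> funext
    · simp [σ]
    · have : τ j ≠ r := fun h => hr ⟨j, h⟩
      simp [σ, this]
  rw [hcomp, F.map_perm]

variable (F : M [⋀^Fin (n + 1)]→ₗ[R] R) (V : Submodule R M)

def curryLeftKer : Submodule R M where
  carrier := {x | (F.curryLeft x).compLinearMap V.subtype = 0}
  zero_mem' := by simp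
  add_mem' {x y} hx hy := by simp_all
  smul_mem' a x hx := by ext w; simp_all [AlternatingMap.ext_iff]

variable {F V}

theorem mem_curryLeftKer {x : M} :
    x ∈ F.curryLeftKer V ↔ ∀ w : Fin n → V, F (Matrix.vecCons x (V.subtype ∘ w)) = 0 :=
  AlternatingMap.ext_iff

theorem curryLeftKer_mapsTo {f : M →ₗ[R] M} {δ : R} (hf : F.compLinearMap f = δ • F)
    (hfV : Set.SurjOn f V V) : Set.MapsTo f (F.curryLeftKer V) (F.curryLeftKer V) := by
  intro x hx
  rw [SetLike.mem_coe, mem_curryLeftKer] at hx ⊢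
  intro w
  choose u hu hfu using fun i => hfV (w i).2
  have hcons : Matrix.vecCons (f x) (V.subtype ∘ w) =
      fun i => f (Matrix.vecCons x (V.subtype ∘ fun i => ⟨u i, hu i⟩) i) := by
    refine Fin.cases ?_ (fun j => ?_) |> funext
    · simp
    · simp [hfu]
  rw [hcons, ← compLinearMap_apply, hf, smul_apply, hx, smul_zero]

variable (F) (e : Module.Basis (Fin (n + 1)) R V)

noncomputable def cramerProj : M →ₗ[R] M :=
  ∑ r, (F.toMultilinearMap.toLinearMap (V.subtype ∘ e) r).smulRight (V.subtype (e r))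

theorem cramerProj_apply (x : M) :
    F.cramerProj e x = ∑ r, F (update (V.subtype ∘ e) r x) • V.subtype (e r) := by
  simp [cramerProj]

theorem cramerProj_mem (x : M) : F.cramerProj e x ∈ V := by
  rw [cramerProj_apply]
  exact V.sum_mem fun r _ => V.smul_mem _ (e r).2

variable {F e} (hF : F (V.subtype ∘ e) = 1)
include hF

theorem map_update_basis (r i : Fin (n + 1)) :
    F (update (V.subtype ∘ e) r (e i)) = if i = r then 1 else 0 := by
  split_ifs with h
  · subst h
    rw [show ((e i : V) : M) = (V.subtype ∘ e) i from rfl, update_eq_self, hF]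
  · exact F.map_eq_zero_of_eq _ (i := i) (j := r) (by simp [h]) h

theorem cramerProj_basis (i : Fin (n + 1)) : F.cramerProj e (e i) = e i := by
  simp only [cramerProj_apply, map_update_basis hF, ite_smul, one_smul, zero_smul,
    Finset.sum_ite_eq, Finset.mem_univ, if_true, Submodule.subtype_apply]

theorem cramerProj_apply_of_mem {v : M} (hv : v ∈ V) : F.cramerProj e v = v := by
  have : F.cramerProj e ∘ₗ V.subtype = V.subtype := e.ext fun i => cramerProj_basis hF i
  exact LinearMap.congr_fun this ⟨v, hv⟩

theorem range_cramerProj : LinearMap.range (F.cramerProj e) = V :=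
  le_antisymm (LinearMap.range_le_iff_comap.mpr (eq_top_iff.mpr fun x _ => cramerProj_mem F e x))
    fun v hv => ⟨v, cramerProj_apply_of_mem hF hv⟩

theorem map_update_cramerProj (r : Fin (n + 1)) (x : M) :
    F (update (V.subtype ∘ e) r (F.cramerProj e x)) = F (update (V.subtype ∘ e) r x) := by
  have := (F.toMultilinearMap.toLinearMap (V.subtype ∘ e) r).congr_arg (cramerProj_apply F e x)
  simpa only [map_sum, map_smul, MultilinearMap.toLinearMap_apply, coe_multilinearMap,
    Submodule.subtype_apply, map_update_basis hF, smul_eq_mul, mul_ite, mul_one, mul_zero,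
    Finset.sum_ite_eq', Finset.mem_univ, if_true] using this

theorem sub_cramerProj_mem_curryLeftKer (x : M) : x - F.cramerProj e x ∈ F.curryLeftKer V := by
  refine e.ext_alternating fun τ hτ => ?_
  -- `τ` misses an index `r`, and up to sign `F (y, e ∘ τ)` is `F` of `e` with `y` in slot `r`.
  obtain ⟨r, hr⟩ : ∃ r, r ∉ Set.range τ := by
    by_contra! h
    simpa using Fintype.card_le_of_surjective τ h
  obtain ⟨ε, hε⟩ := F.exists_map_vecCons_eq_units_smul_map_update (V.subtype ∘ e) hτ hr
  have := hε (x - F.cramerProj e x)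
  rw [F.map_update_sub, map_update_cramerProj hF, sub_self, smul_zero] at this
  exact this

theorem disjoint_curryLeftKer : Disjoint V (F.curryLeftKer V) := by
  rw [Submodule.disjoint_def]
  intro v hV hK
  rw [← cramerProj_apply_of_mem hF hV, cramerProj_apply]
  refine Finset.sum_eq_zero fun r _ => ?_
  obtain ⟨ε, hε⟩ := F.exists_map_vecCons_eq_units_smul_map_update (V.subtype ∘ e)
    (Fin.succAbove_right_injective (p := r)) (r := r) (by simp)
  have h0 := hε v
  rw [Function.comp_assoc, (F.mem_curryLeftKer).mp hK, eq_comm, smul_eq_zero_iff_eq] at h0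
  rw [h0, zero_smul]

theorem cramerProj_map_apply {f : M →ₗ[R] M} {δ : R} (hf : F.compLinearMap f = δ • F)
    (hVf : Set.MapsTo f V V) (hfV : Set.SurjOn f V V) (x : M) :
    F.cramerProj e (f x) = f (F.cramerProj e x) := by
  have hK : f x - f (F.cramerProj e x) ∈ F.curryLeftKer V := by
    rw [← map_sub]
    exact curryLeftKer_mapsTo hf hfV (sub_cramerProj_mem_curryLeftKer hF x)
  have hV : F.cramerProj e (f x) - f (F.cramerProj e x) ∈ V :=
    V.sub_mem (cramerProj_mem F e _) (hVf (cramerProj_mem F e x))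
  refine sub_eq_zero.mp (Submodule.disjoint_def.mp (disjoint_curryLeftKer hF) _ hV ?_)
  simpa using (F.curryLeftKer V).sub_mem hK (sub_cramerProj_mem_curryLeftKer hF (f x))

end AlternatingMap

theorem LinearMap.exists_eq_smul_of_forall_mem_span_singleton {K M N : Type*} [Field K]
    [AddCommGroup M] [Module K M] [AddCommGroup N] [Module K N] (t : M →ₗ[K] N) {ω : N}
    (hω : ω ≠ 0) (ht : ∀ x, t x ∈ K ∙ ω) : ∃ c : M →ₗ[K] K, ∀ x, t x = c x • ω :=
  ⟨(LinearEquiv.toSpanNonzeroSingleton K N ω hω).symm ∘ₗ t.codRestrict _ ht, fun x => by simp⟩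

theorem LinearMap.comp_eq_smul_of_commute {K M : Type*} [Field K] [AddCommGroup M] [Module K M]
    {s T : M →ₗ[K] M} {c : M →ₗ[K] K} {ω : M} (hω : ω ≠ 0) (hs : ∀ x, s x = c x • ω)
    (hsT : ∀ x, s (T x) = T (s x)) {δ : K} (hTω : T ω = δ • ω) : c ∘ₗ T = δ • c := by
  ext x
  apply smul_left_injective K hω
  show c (T x) • ω = (δ * c x) • ω
  rw [← hs, hsT, hs, map_smul, hTω, smul_smul, mul_comm]

theorem ExteriorAlgebra.ιMulti_ne_zero_of_basis {R M : Type*} [CommRing R] [Nontrivial R]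
    [AddCommGroup M] [Module R M] {m : ℕ} (e : Module.Basis (Fin m) R M) :
    ιMulti R m e ≠ 0 := by
  intro h
  have := congr(liftAlternating (Pi.single m e.det) $h)
  rw [liftAlternating_apply_ιMulti, Pi.single_eq_same, e.det_self, map_zero] at this
  exact one_ne_zero this

section ExteriorPower

variable {k H : Type*} [Field k] [AddCommGroup H] [Module k H] {m : ℕ} {V : Submodule k H}

theorem ιMulti_mem_exteriorPowerLine (w : Fin m → V) :
    ExteriorAlgebra.ιMulti k m (V.subtype ∘ w) ∈ exteriorPowerLine m V :=
  ⟨ExteriorAlgebra.ιMulti k m w, ExteriorAlgebra.ιMulti_range k m (Set.mem_range_self w),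
    ExteriorAlgebra.map_apply_ιMulti _ _⟩

theorem exteriorPowerLine_le_span (e : Module.Basis (Fin m) k V) :
    exteriorPowerLine m V ≤ k ∙ ExteriorAlgebra.ιMulti k m (V.subtype ∘ e) := by
  rw [exteriorPowerLine, ← ExteriorAlgebra.ιMulti_span_fixedDegree, Submodule.map_span_le]
  rintro _ ⟨w, rfl⟩
  rw [AlternatingMap.map_eq_det_smul _ e w, map_smul, AlgHom.toLinearMap_apply,
    ExteriorAlgebra.map_apply_ιMulti]
  exact Submodule.smul_mem _ _ (Submodule.mem_span_singleton_self _)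

theorem mem_span_of_coe_mem_exteriorPowerLine (e : Module.Basis (Fin m) k V) {x : ⋀[k]^m H}
    (hx : (x : ExteriorAlgebra k H) ∈ exteriorPowerLine m V) :
    x ∈ k ∙ exteriorPower.ιMulti k m (V.subtype ∘ e) := by
  obtain ⟨a, ha⟩ := Submodule.mem_span_singleton.mp (exteriorPowerLine_le_span e hx)
  exact Submodule.mem_span_singleton.mpr ⟨a, Subtype.ext ha⟩

theorem exteriorPower_ιMulti_subtype_basis_ne_zero (e : Module.Basis (Fin m) k V) :
    exteriorPower.ιMulti k m (V.subtype ∘ e) ≠ 0 := by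
  intro h
  have h' := congr(($h : ExteriorAlgebra k H))
  rw [exteriorPower.ιMulti_apply_coe, ← ExteriorAlgebra.map_apply_ιMulti,
    ZeroMemClass.coe_zero, ← map_zero (ExteriorAlgebra.map V.subtype)] at h'
  exact ExteriorAlgebra.ιMulti_ne_zero_of_basis e
    (ExteriorAlgebra.map_injective_field V.ker_subtype h')

theorem exteriorPowerMap_ιMulti (f : H →ₗ[k] H) (u : Fin m → H) :
    exteriorPowerMap f m (exteriorPower.ιMulti k m u) = exteriorPower.ιMulti k m (f ∘ u) :=
  Subtype.ext (ExteriorAlgebra.map_apply_ιMulti f u)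

theorem exteriorPowerMap_ιMulti_mem_exteriorPowerLine {f : H →ₗ[k] H} (hf : ∀ v ∈ V, f v ∈ V)
    (w : Fin m → V) :
    (exteriorPowerMap f m (exteriorPower.ιMulti k m (V.subtype ∘ w)) : ExteriorAlgebra k H) ∈
      exteriorPowerLine m V := by
  rw [exteriorPowerMap_ιMulti]
  exact ιMulti_mem_exteriorPowerLine fun i => ⟨f (w i), hf _ (w i).2⟩

end ExteriorPower

theorem equivariant_splitting_of_exterior_splitting_general {k G H : Type*} [Field k]
    [Group G] [AddCommGroup H] [Module k H] [FiniteDimensional k H]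
    (ρ : Representation k G H) (V : Submodule k H)
    (hV : ∀ g : G, ∀ v ∈ V, ρ g v ∈ V) (m : ℕ) (hm : 1 ≤ m)
    (hdim : Module.finrank k V = m)
    (s : (⋀[k]^m H) →ₗ[k] (⋀[k]^m H))
    (hrange : ∀ x : ⋀[k]^m H, (s x : ExteriorAlgebra k H) ∈ exteriorPowerLine m V)
    (hsplit : ∀ x : ⋀[k]^m H, (x : ExteriorAlgebra k H) ∈ exteriorPowerLine m V → s x = x)
    (hequiv : ∀ (g : G) (x : ⋀[k]^m H),
      s (exteriorPowerMap (ρ g) m x) = exteriorPowerMap (ρ g) m (s x)) :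
    ∃ π : H →ₗ[k] H, LinearMap.range π = V ∧ (∀ v ∈ V, π v = v) ∧
      ∀ (g : G) (h : H), π (ρ g h) = ρ g (π h) := by
  obtain ⟨n, rfl⟩ := Nat.exists_eq_add_of_le' hm
  let e := Module.finBasisOfFinrankEq k V hdim
  let ω := exteriorPower.ιMulti k (n + 1) (V.subtype ∘ e)
  have hω : ω ≠ 0 := exteriorPower_ιMulti_subtype_basis_ne_zero e
  obtain ⟨c, hc⟩ := s.exists_eq_smul_of_forall_mem_span_singleton hω
    fun x => mem_span_of_coe_mem_exteriorPowerLine e (hrange x)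
  have hcω : c ω = 1 :=
    smul_left_injective k hω (by simpa [← hc] using hsplit ω (ιMulti_mem_exteriorPowerLine e))
  let F := c.compAlternatingMap (exteriorPower.ιMulti k (n + 1))
  have hFρ : ∀ g, F.compLinearMap (ρ g) = c (exteriorPowerMap (ρ g) _ ω) • F := by
    intro g
    have hTω : exteriorPowerMap (ρ g) _ ω = c (exteriorPowerMap (ρ g) _ ω) • ω := by
      rw [← hc, hsplit _ (exteriorPowerMap_ιMulti_mem_exteriorPowerLine (hV g) e)]
    have hcT := LinearMap.comp_eq_smul_of_commute hω hc (hequiv g) hTω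
    ext u
    have := congr($hcT (exteriorPower.ιMulti k _ u))
    rwa [LinearMap.comp_apply, exteriorPowerMap_ιMulti] at this
  refine ⟨F.cramerProj e, AlternatingMap.range_cramerProj hcω,
    fun v hv => AlternatingMap.cramerProj_apply_of_mem hcω hv,
    fun g h => AlternatingMap.cramerProj_map_apply hcω (hFρ g) (hV g) ?_ h⟩
  exact fun v hv => ⟨ρ g⁻¹ v, hV g⁻¹ v hv, ρ.self_inv_apply g v⟩

/-- If `V ⊆ H` is an `m`-dimensional (`m ≥ 1`) `G`-submodule of a finite-dimensional
representation of `G` over a field of characteristic zero, and there is a `G`-equivariant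
linear splitting `s : Λ^m H → Λ^m V` of the inclusion `Λ^m V ↪ Λ^m H`, then the
inclusion `V ↪ H` admits a `G`-equivariant splitting `H → V`. -/
theorem equivariant_splitting_of_exterior_splitting {k G H : Type*} [Field k] [CharZero k]
    [Group G] [AddCommGroup H] [Module k H] [FiniteDimensional k H]
    (ρ : Representation k G H) (V : Submodule k H)
    (hV : ∀ g : G, ∀ v ∈ V, ρ g v ∈ V) (m : ℕ) (hm : 1 ≤ m)
    (hdim : Module.finrank k V = m)
    (s : (⋀[k]^m H) →ₗ[k] (⋀[k]^m H))
    (hrange : ∀ x : ⋀[k]^m H, (s x : ExteriorAlgebra k H) ∈ exteriorPowerLine m V)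
    (hsplit : ∀ x : ⋀[k]^m H, (x : ExteriorAlgebra k H) ∈ exteriorPowerLine m V → s x = x)
    (hequiv : ∀ (g : G) (x : ⋀[k]^m H),
      s (exteriorPowerMap (ρ g) m x) = exteriorPowerMap (ρ g) m (s x)) :
    ∃ π : H →ₗ[k] H, LinearMap.range π = V ∧ (∀ v ∈ V, π v = v) ∧
      ∀ (g : G) (h : H), π (ρ g h) = ρ g (π h) :=
  equivariant_splitting_of_exterior_splitting_general ρ V hV m hm hdim s hrange hsplit hequiv
end

section
/- Let G be a group, N ≤ G a subgroup of finite index, and ρ a finite-dimensional representation of G over a field of characteristic zero. If the restriction of ρ to N is semisimple, then ρ is semisimple. -/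
/-- A subspace `W` is a subrepresentation for `ρ` if it is stable under every `ρ g`. -/
def IsSubrep {k G V : Type*} [Field k] [Monoid G] [AddCommGroup V] [Module k V]
    (ρ : Representation k G V) (W : Submodule k V) : Prop :=
  ∀ g : G, ∀ v ∈ W, ρ g v ∈ W

/-- A representation is semisimple iff every subrepresentation admits a complementary
subrepresentation. -/
def IsSemisimpleRep {k G V : Type*} [Field k] [Monoid G] [AddCommGroup V] [Module k V]
    (ρ : Representation k G V) : Prop :=
  ∀ W : Submodule k V, IsSubrep ρ W →
    ∃ W' : Submodule k V, IsSubrep ρ W' ∧ IsCompl W W'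

/-!
Restrict `ρ` to `N` to get an `N`-equivariant projection `π` onto a given subrepresentation `W`.
Since `π` commutes with `N`, its conjugate `ρ g ∘ π ∘ ρ g⁻¹` only depends on the coset `gN`, so
averaging these conjugates over the finitely many cosets is possible; the average is still a
projection onto `W` (this is where `[G : N]` must be invertible in `k`) and it commutes with
all of `G`. Its kernel is the required `G`-stable complement of `W`.
-/

open Module LinearMap Submodule

attribute [local instance] Subgroup.fintypeQuotientOfFiniteIndex

section Monoid

variable {k G V : Type*} [Field k] [Monoid G] [AddCommGroup V] [Module k V]
  {ρ : Representation k G V}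

lemma isSubrep_ker_of_commute {p : Module.End k V} (hp : ∀ g, Commute (ρ g) p) :
    IsSubrep ρ (ker p) := by
  intro g v hv
  rw [mem_ker] at hv ⊢
  rw [← Module.End.mul_apply, ← (hp g).eq, Module.End.mul_apply, hv, map_zero]

lemma commute_projection_of_isSubrep {W W' : Submodule k V} (hW : IsSubrep ρ W)
    (hW' : IsSubrep ρ W') (hc : IsCompl W W') (g : G) : Commute (ρ g) (W.projection W' hc) := by
  refine ((IsIdempotentElem.commute_iff (isIdempotentElem_projection hc)).2 ⟨?_, ?_⟩).symm
  · rw [range_projection]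
    exact (Module.End.mem_invtSubmodule_iff_forall_mem_of_mem _).2 (hW g)
  · rw [ker_projection]
    exact (Module.End.mem_invtSubmodule_iff_forall_mem_of_mem _).2 (hW' g)

end Monoid

namespace Representation

variable {k G V : Type*} [Field k] [Group G] [AddCommGroup V] [Module k V]
  {ρ : Representation k G V} {N : Subgroup G}

lemma conj_eq_of_mk_eq {π : Module.End k V} (hπ : ∀ n : N, Commute (ρ n) π) {a b : G}
    (hab : (a : G ⧸ N) = b) : ρ a * π * ρ a⁻¹ = ρ b * π * ρ b⁻¹ := by
  obtain ⟨n, rfl⟩ : ∃ n : N, b = a * n := ⟨⟨a⁻¹ * b, QuotientGroup.eq.1 hab⟩, by simp⟩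
  have hn : ρ n * π * ρ n⁻¹ = π := by
    rw [(hπ n).eq, mul_assoc, ← map_mul, mul_inv_cancel, map_one, mul_one]
  conv_lhs => rw [← hn]
  simp only [mul_inv_rev, map_mul, mul_assoc]

variable (ρ N) in
noncomputable def cosetAverage [N.FiniteIndex] (π : Module.End k V) : Module.End k V :=
  (N.index : k)⁻¹ • ∑ c : G ⧸ N, ρ c.out * π * ρ c.out⁻¹

variable [N.FiniteIndex]

lemma commute_cosetAverage {π : Module.End k V} (hπ : ∀ n : N, Commute (ρ n) π) (g : G) :
    Commute (ρ g) (ρ.cosetAverage N π) := by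
  refine Commute.smul_right ?_ _
  have hconj : ∀ c : G ⧸ N,
      ρ g * (ρ c.out * π * ρ c.out⁻¹) = ρ (g • c).out * π * ρ (g • c).out⁻¹ * ρ g := by
    intro c
    have hmk : ((g * c.out : G) : G ⧸ N) = (g • c).out := by
      rw [QuotientGroup.out_eq']
      exact congrArg (g • ·) (QuotientGroup.out_eq' c)
    rw [← conj_eq_of_mk_eq hπ hmk, map_mul, mul_inv_rev, map_mul]
    simp only [mul_assoc, ← map_mul ρ g⁻¹ g, inv_mul_cancel, map_one, mul_one]
  rw [Commute, SemiconjBy, Finset.mul_sum, Finset.sum_mul, Finset.sum_congr rfl fun c _ => hconj c]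
  exact Fintype.sum_bijective (g • ·) (MulAction.bijective g) _ _ fun _ => rfl

lemma isProj_cosetAverage (hN : (N.index : k) ≠ 0) {W : Submodule k V} (hW : IsSubrep ρ W)
    {π : Module.End k V} (hπ : IsProj W π) : IsProj W (ρ.cosetAverage N π) where
  map_mem v := by
    simp only [cosetAverage, LinearMap.smul_apply, LinearMap.sum_apply, Module.End.mul_apply]
    exact W.smul_mem _ (W.sum_mem fun c _ => hW _ _ (hπ.map_mem _))
  map_id v hv := by
    have hconj : ∀ c : G ⧸ N, (ρ c.out * π * ρ c.out⁻¹) v = v := fun c => by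
      rw [Module.End.mul_apply, Module.End.mul_apply, hπ.map_id _ (hW _ _ hv),
        ← Module.End.mul_apply, ← map_mul, mul_inv_cancel, map_one, Module.End.one_apply]
    rw [cosetAverage, LinearMap.smul_apply, LinearMap.sum_apply,
      Finset.sum_congr rfl fun c _ => hconj c, Finset.sum_const, Finset.card_univ,
      ← Nat.card_eq_fintype_card, ← Subgroup.index, ← Nat.cast_smul_eq_nsmul k, inv_smul_smul₀ hN]

end Representation

theorem semisimple_of_restriction_finiteIndex_general {k G V : Type*} [Field k] [CharZero k]
    [Group G] [AddCommGroup V] [Module k V]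
    (ρ : Representation k G V) (N : Subgroup G) [N.FiniteIndex]
    (h : IsSemisimpleRep (ρ.comp N.subtype)) : IsSemisimpleRep ρ := by
  intro W hW
  obtain ⟨W', hW', hc⟩ := h W fun n => hW n
  have hN : (N.index : k) ≠ 0 := Nat.cast_ne_zero.2 Subgroup.FiniteIndex.index_ne_zero
  have hπ : IsProj W (W.projection W' hc) :=
    ⟨projection_apply_mem hc, fun _ => projection_apply_of_mem_left hc⟩
  have hπN : ∀ n : N, Commute (ρ n) (W.projection W' hc) :=
    commute_projection_of_isSubrep (ρ := ρ.comp N.subtype) (fun n => hW n) hW' hc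
  exact ⟨_, isSubrep_ker_of_commute (ρ.commute_cosetAverage hπN),
    (ρ.isProj_cosetAverage hN hW hπ).isCompl⟩

/-- If the restriction of a finite-dimensional representation in characteristic zero
to a finite-index subgroup is semisimple, then the representation itself is semisimple. -/
theorem semisimple_of_restriction_finiteIndex {k G V : Type*} [Field k] [CharZero k]
    [Group G] [AddCommGroup V] [Module k V] [FiniteDimensional k V]
    (ρ : Representation k G V) (N : Subgroup G) [N.FiniteIndex]
    (h : IsSemisimpleRep (ρ.comp N.subtype)) : IsSemisimpleRep ρ :=
  semisimple_of_restriction_finiteIndex_general ρ N h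
end

section
/- Let G be a group, H ≤ G a subgroup of finite index, and W a finite-dimensional representation of H over a field of characteristic zero. If the induced representation Ind_H^G W is semisimple as a G-representation, then W is semisimple as an H-representation. -/
/-- The underlying space of the representation of `G` induced from a representation
`ρ : H → GL(W)` of a subgroup `H ≤ G`: functions `f : G → W` satisfying
`f (h * g) = ρ h (f g)` for all `h ∈ H`, `g ∈ G`. -/
def inducedCarrier {k G W : Type*} [Field k] [Group G] [AddCommGroup W] [Module k W]
    (H : Subgroup G) (ρ : Representation k H W) : Submodule k (G → W) where
  carrier := {f | ∀ (h : H) (g : G), f (↑h * g) = ρ h (f g)}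
  add_mem' ha hb h g := by simp [ha h g, hb h g]
  zero_mem' h g := by simp
  smul_mem' c f hf h g := by simp [hf h g]

/-- The representation of `G` induced from a representation of a subgroup `H ≤ G`,
given by right translation on the space `inducedCarrier H ρ`. -/
def inducedRep {k G W : Type*} [Field k] [Group G] [AddCommGroup W] [Module k W]
    (H : Subgroup G) (ρ : Representation k H W) :
    Representation k G (inducedCarrier H ρ) where
  toFun g :=
    { toFun := fun f => ⟨fun x => (f : G → W) (x * g),
        fun h x => by simpa [mul_assoc] using f.2 h (x * g)⟩
      map_add' := fun a b => rfl
      map_smul' := fun c a => rfl }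
  map_one' := by ext f x; simp
  map_mul' g₁ g₂ := by ext f x; simp [mul_assoc]


/-! The projection `π` of `Ind_H^G W` onto the `G`-stable subspace of functions with values in an
`H`-subrepresentation `U ≤ W`, along a `G`-stable complement, commutes with `H`. Conjugating it by
extension by zero `W → Ind_H^G W` and evaluation at `1` gives an `H`-equivariant projection of `W`
onto `U`, whose kernel is the required complement. -/

section IsSubrep

variable {k G V : Type*} [Field k] [Monoid G] [AddCommGroup V] [Module k V]
  {ρ : Representation k G V}

theorem IsSubrep.projection_apply_rep {U U' : Submodule k V} (hU : IsSubrep ρ U)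
    (hU' : IsSubrep ρ U') (hUU' : IsCompl U U') (g : G) (v : V) :
    U.projection U' hUU' (ρ g v) = ρ g (U.projection U' hUU' v) := by
  have hinvt : ∀ {X : Submodule k V}, IsSubrep ρ X → X ∈ Module.End.invtSubmodule (ρ g) :=
    fun hX => hX g
  have hcomm := (LinearMap.IsIdempotentElem.commute_iff
    (Submodule.isIdempotentElem_projection hUU')).mpr
    ⟨(Submodule.range_projection hUU').symm ▸ hinvt hU,
      (Submodule.ker_projection hUU').symm ▸ hinvt hU'⟩
  exact LinearMap.congr_fun hcomm.eq v

theorem exists_isSubrep_isCompl_of_proj {U : Submodule k V} (p : V →ₗ[k] V)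
    (hp_mem : ∀ v, p v ∈ U) (hp_id : ∀ u ∈ U, p u = u)
    (hp_rep : ∀ g v, p (ρ g v) = ρ g (p v)) :
    ∃ U' : Submodule k V, IsSubrep ρ U' ∧ IsCompl U U' := by
  refine ⟨LinearMap.ker p, fun g v hv => ?_, ?_⟩
  · rw [LinearMap.mem_ker, hp_rep, LinearMap.mem_ker.mp hv, map_zero]
  · have hcompl := LinearMap.isCompl_of_proj (f := p.codRestrict U hp_mem)
      fun u => Subtype.ext (hp_id u u.2)
    rwa [LinearMap.ker_codRestrict] at hcompl

end IsSubrep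

namespace inducedCarrier

variable {k G W : Type*} [Field k] [Group G] [AddCommGroup W] [Module k W]
  {H : Subgroup G} {ρ : Representation k H W}

variable (H ρ) in
open Classical in
noncomputable def extendByZero : W →ₗ[k] inducedCarrier H ρ where
  toFun w := ⟨fun g => if hg : g ∈ H then ρ ⟨g, hg⟩ w else 0, fun h g => by
    dsimp only
    by_cases hg : g ∈ H
    · rw [dif_pos hg, dif_pos (mul_mem h.2 hg), ← Module.End.mul_apply, ← map_mul]
      rfl
    · rw [dif_neg hg, dif_neg fun hhg => hg <| by simpa using mul_mem (inv_mem h.2) hhg,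
        map_zero]⟩
  map_add' _ _ := by ext g; by_cases hg : g ∈ H <;> simp [hg]
  map_smul' _ _ := by ext g; by_cases hg : g ∈ H <;> simp [hg]

theorem extendByZero_apply_of_mem (w : W) {g : G} (hg : g ∈ H) :
    (extendByZero H ρ w : G → W) g = ρ ⟨g, hg⟩ w :=
  dif_pos hg

theorem extendByZero_apply_of_notMem (w : W) {g : G} (hg : g ∉ H) :
    (extendByZero H ρ w : G → W) g = 0 :=
  dif_neg hg

theorem extendByZero_rep (h : H) (w : W) :
    extendByZero H ρ (ρ h w) = inducedRep H ρ h (extendByZero H ρ w) := by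
  ext g
  change _ = (extendByZero H ρ w : G → W) (g * h)
  by_cases hg : g ∈ H
  · rw [extendByZero_apply_of_mem _ hg, extendByZero_apply_of_mem _ (mul_mem hg h.2),
      ← Module.End.mul_apply, ← map_mul]
    rfl
  · rw [extendByZero_apply_of_notMem _ hg, extendByZero_apply_of_notMem _
      fun hgh => hg <| by simpa using mul_mem hgh (inv_mem h.2)]

variable (H ρ) in
def evalOne : inducedCarrier H ρ →ₗ[k] W where
  toFun f := (f : G → W) 1
  map_add' _ _ := rfl
  map_smul' _ _ := rfl

theorem evalOne_extendByZero (w : W) : evalOne H ρ (extendByZero H ρ w) = w := by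
  rw [evalOne, LinearMap.coe_mk, AddHom.coe_mk, extendByZero_apply_of_mem _ (one_mem H)]
  exact LinearMap.congr_fun (map_one ρ) w

theorem evalOne_inducedRep (h : H) (f : inducedCarrier H ρ) :
    evalOne H ρ (inducedRep H ρ h f) = ρ h (evalOne H ρ f) := by
  change (f : G → W) (1 * h) = ρ h ((f : G → W) 1)
  rw [one_mul, ← f.2 h 1, mul_one]

variable (H ρ) in
def valuedIn (U : Submodule k W) : Submodule k (inducedCarrier H ρ) where
  carrier := {f | ∀ g : G, (f : G → W) g ∈ U}
  add_mem' hf hf' g := U.add_mem (hf g) (hf' g)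
  zero_mem' _ := U.zero_mem
  smul_mem' c _ hf g := U.smul_mem c (hf g)

theorem isSubrep_valuedIn (U : Submodule k W) : IsSubrep (inducedRep H ρ) (valuedIn H ρ U) :=
  fun g _ hf x => hf (x * g)

theorem extendByZero_mem_valuedIn {U : Submodule k W} (hU : IsSubrep ρ U) {w : W} (hw : w ∈ U) :
    extendByZero H ρ w ∈ valuedIn H ρ U := by
  intro g
  by_cases hg : g ∈ H
  · rw [extendByZero_apply_of_mem _ hg]; exact hU _ _ hw
  · rw [extendByZero_apply_of_notMem _ hg]; exact U.zero_mem

end inducedCarrier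

theorem semisimple_of_induced_semisimple_general {k G W : Type*} [Field k] [Group G]
    [AddCommGroup W] [Module k W]
    (H : Subgroup G) (ρ : Representation k H W)
    (h : IsSemisimpleRep (inducedRep H ρ)) : IsSemisimpleRep ρ := by
  intro U hU
  obtain ⟨C, hC, hcompl⟩ := h _ (inducedCarrier.isSubrep_valuedIn U)
  let π := (inducedCarrier.valuedIn H ρ U).projection C hcompl
  refine exists_isSubrep_isCompl_of_proj
    (inducedCarrier.evalOne H ρ ∘ₗ π ∘ₗ inducedCarrier.extendByZero H ρ)
    (fun _ => Submodule.projection_apply_mem hcompl _ 1) (fun w hw => ?_) (fun h₀ w => ?_)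
  · have hw' := inducedCarrier.extendByZero_mem_valuedIn hU hw
    simp only [LinearMap.comp_apply, π, Submodule.projection_apply_of_mem_left hcompl hw',
      inducedCarrier.evalOne_extendByZero]
  · simp only [LinearMap.comp_apply, π, inducedCarrier.extendByZero_rep,
      (inducedCarrier.isSubrep_valuedIn U).projection_apply_rep hC hcompl,
      inducedCarrier.evalOne_inducedRep]

/-- If `H ≤ G` has finite index and `W` is a finite-dimensional representation of `H`
over a field of characteristic zero such that `Ind_H^G W` is semisimple as a
`G`-representation, then `W` is semisimple as an `H`-representation. -/
theorem semisimple_of_induced_semisimple {k G W : Type*} [Field k] [CharZero k] [Group G]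
    [AddCommGroup W] [Module k W] [FiniteDimensional k W]
    (H : Subgroup G) [H.FiniteIndex] (ρ : Representation k H W)
    (h : IsSemisimpleRep (inducedRep H ρ)) : IsSemisimpleRep ρ :=
  semisimple_of_induced_semisimple_general H ρ h
end

section
/- Let G be a group and V a finite-dimensional representation of G over a field k. If the restriction of V to a finite-index subgroup N ≤ G is semisimple and char k = 0, then V is semisimple; conversely, if V is semisimple then its restriction to any finite-index normal subgroup N is semisimple (Clifford's theorem direction). -/
open Representation

instance CompleteSublattice.instIsModularLattice {α : Type*} [CompleteLattice α]
    [IsModularLattice α] (L : CompleteSublattice α) : IsModularLattice L :=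
  ⟨fun {_} y {z} hxz => IsModularLattice.sup_inf_le_assoc_of_le (y : α) (z := (z : α)) hxz⟩

theorem OrderIso.map_sSup_atoms {α β : Type*} [CompleteLattice α] [CompleteLattice β]
    (e : α ≃o β) : e (sSup {a | IsAtom a}) = sSup {b | IsAtom b} := by
  rw [map_sSup, ← sSup_image, e.image_eq_preimage_symm]
  congr 1
  ext b
  exact e.symm.isAtom_iff b

theorem complementedLattice_of_isComplemented_sSup_atoms {α : Type*} [CompleteLattice α]
    [IsModularLattice α] [IsAtomic α] [IsCompactlyGenerated α]
    (h : IsComplemented (sSup {a : α | IsAtom a})) : ComplementedLattice α := by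
  obtain ⟨c, hc⟩ := h
  have hc_bot : c = ⊥ := by
    refine (eq_bot_or_exists_atom_le c).resolve_right ?_
    rintro ⟨a, ha, hac⟩
    exact ha.1 (le_bot_iff.mp (hc.disjoint (le_sSup ha) hac))
  refine complementedLattice_of_sSup_atoms_eq_top ?_
  simpa [hc_bot] using hc.codisjoint.eq_top

theorem LinearMap.IsProj.inv_card_smul_sum {K E ι : Type*} [Field K] [AddCommGroup E]
    [Module K E] [Fintype ι] {m : Submodule K E} {f : ι → E →ₗ[K] E}
    (hf : ∀ i, IsProj m (f i)) (hι : (Fintype.card ι : K) ≠ 0) :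
    IsProj m ((Fintype.card ι : K)⁻¹ • ∑ i, f i) where
  map_mem x := m.smul_mem _ (by simpa using m.sum_mem fun i _ => (hf i).map_mem x)
  map_id x hx := by
    simp [(hf _).map_id x hx, ← Nat.cast_smul_eq_nsmul K, smul_smul, inv_mul_cancel₀ hι]

theorem Representation.sum_quotient_out_mem_invariants {R G X : Type*} [CommRing R] [Group G]
    [AddCommGroup X] [Module R X] (σ : Representation R G X) {N : Subgroup G}
    [Fintype (G ⧸ N)] {x : X} (hx : x ∈ invariants (σ.comp N.subtype)) :
    ∑ q : G ⧸ N, σ q.out x ∈ σ.invariants := by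
  have hcoset : ∀ a b : G, (a : G ⧸ N) = b → σ a x = σ b x := by
    intro a b hab
    obtain ⟨n, rfl⟩ : ∃ n : N, b = a * n := ⟨⟨a⁻¹ * b, QuotientGroup.eq.mp hab⟩, by simp⟩
    rw [map_mul, Module.End.mul_apply]
    exact congrArg (σ a) (hx n).symm
  intro g
  rw [map_sum]
  refine Fintype.sum_equiv (MulAction.toPerm g) _ _ fun q => ?_
  rw [← Module.End.mul_apply, ← map_mul]
  refine hcoset _ _ ?_
  rw [QuotientGroup.out_eq']
  exact MulAction.Quotient.coe_smul_out N g q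

section Monoid

variable {k G V : Type*} [Field k] [Monoid G] [AddCommGroup V] [Module k V]
  (ρ : Representation k G V)

def subrepLattice : CompleteSublattice (Submodule k V) :=
  .mk' {W | IsSubrep ρ W}
    (fun s hs g => show sSup s ≤ (sSup s).comap (ρ g) from
      sSup_le fun _ hW => le_trans (hs hW g) (Submodule.comap_mono (le_sSup hW)))
    (fun _ hs g v hv =>
      Submodule.mem_sInf.mpr fun W hW => hs hW g v (Submodule.mem_sInf.mp hv W hW))

theorem isSemisimpleRep_iff_complementedLattice :
    IsSemisimpleRep ρ ↔ ComplementedLattice (subrepLattice ρ) := by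
  rw [CompleteSublattice.isComplemented_iff]
  rfl

theorem isSemisimpleRep_iff_forall_exists_isProj : IsSemisimpleRep ρ ↔
    ∀ W, IsSubrep ρ W → ∃ f : V →ₗ[k] V, LinearMap.IsProj W f ∧ ρ.IsIntertwiningMap ρ f := by
  refine ⟨fun h W hW => ?_, fun h W hW => ?_⟩
  · obtain ⟨W', hW', hWW'⟩ := h W hW
    refine ⟨W.projection W' hWW', ⟨W.projection_apply_mem hWW',
      fun _ => W.projection_apply_of_mem_left hWW'⟩, ⟨fun g v => ?_⟩⟩
    have hcomm := (LinearMap.IsIdempotentElem.commute_iff (T := ρ g)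
      (W.isIdempotentElem_projection hWW')).mpr
      ⟨(W.range_projection hWW').symm ▸ hW g, (W.ker_projection hWW').symm ▸ hW' g⟩
    exact LinearMap.congr_fun hcomm v
  · obtain ⟨f, hf, hfρ⟩ := h W hW
    refine ⟨LinearMap.ker f, fun g v hv => ?_, hf.isCompl⟩
    rw [LinearMap.mem_ker] at hv ⊢
    rw [hfρ.isIntertwining, hv, map_zero]

end Monoid

section Group

variable {k G V : Type*} [Field k] [Group G] [AddCommGroup V] [Module k V]
  (ρ : Representation k G V) {N : Subgroup G}

theorem IsSubrep.isProj_linHom {W : Submodule k V} (hW : IsSubrep ρ W) {f : V →ₗ[k] V}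
    (hf : LinearMap.IsProj W f) (g : G) : LinearMap.IsProj W (linHom ρ ρ g f) where
  map_mem v := hW g _ (hf.map_mem _)
  map_id w hw := by simp [hf.map_id _ (hW g⁻¹ w hw)]

theorem isSemisimpleRep_of_comp_subtype (hN : (N.index : k) ≠ 0)
    (h : IsSemisimpleRep (ρ.comp N.subtype)) : IsSemisimpleRep ρ := by
  have : N.FiniteIndex := ⟨fun h0 => hN (by rw [h0, Nat.cast_zero])⟩
  have := N.fintypeQuotientOfFiniteIndex
  have hcard : (Fintype.card (G ⧸ N) : k) ≠ 0 := by
    rwa [N.index_eq_card, Nat.card_eq_fintype_card] at hN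
  rw [isSemisimpleRep_iff_forall_exists_isProj] at h ⊢
  intro W hW
  obtain ⟨π, hπ, hπN⟩ := h W fun n => hW n
  have hπ_inv : π ∈ invariants ((linHom ρ ρ).comp N.subtype) :=
    (mem_linHom_invariants_iff_isIntertwining π).mpr hπN
  refine ⟨(Fintype.card (G ⧸ N) : k)⁻¹ • ∑ q : G ⧸ N, linHom ρ ρ q.out π,
    .inv_card_smul_sum (fun q => hW.isProj_linHom ρ hπ q.out) hcard,
    (mem_linHom_invariants_iff_isIntertwining _).mp ?_⟩
  exact Submodule.smul_mem _ _ ((linHom ρ ρ).sum_quotient_out_mem_invariants hπ_inv)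

theorem IsSubrep.map_of_normal (hN : N.Normal) {W : Submodule k V}
    (hW : IsSubrep (ρ.comp N.subtype) W) (g : G) :
    IsSubrep (ρ.comp N.subtype) (W.map (ρ g)) := by
  rintro n _ ⟨w, hw, rfl⟩
  have hconj : ρ n (ρ g w) = ρ g (ρ (g⁻¹ * n * g) w) := by
    simp only [← Module.End.mul_apply, ← map_mul, mul_assoc, mul_inv_cancel_left]
  have hn : g⁻¹ * n * g ∈ N := by simpa using hN.conj_mem _ n.2 g⁻¹
  exact hconj ▸ Submodule.mem_map_of_mem (hW ⟨_, hn⟩ w hw)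

theorem Representation.map_inv_map_submodule (g : G) (W : Submodule k V) :
    (W.map (ρ g)).map (ρ g⁻¹) = W := by
  rw [← Submodule.map_comp]
  convert Submodule.map_id W
  ext
  simp

def subrepLatticeMapOfNormal (hN : N.Normal) (g : G) :
    subrepLattice (ρ.comp N.subtype) ≃o subrepLattice (ρ.comp N.subtype) where
  toFun W := ⟨W.1.map (ρ g), W.2.map_of_normal ρ hN g⟩
  invFun W := ⟨W.1.map (ρ g⁻¹), W.2.map_of_normal ρ hN g⁻¹⟩
  left_inv W := Subtype.ext (ρ.map_inv_map_submodule g W)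
  right_inv W := Subtype.ext (by simpa using ρ.map_inv_map_submodule g⁻¹ W)
  map_rel_iff' {A B} := Submodule.map_le_map_iff_of_injective (ρ.apply_bijective g).1 A.1 B.1

theorem isSubrep_sSup_atoms_of_normal (hN : N.Normal) :
    IsSubrep ρ (sSup {A : subrepLattice (ρ.comp N.subtype) | IsAtom A} :) := by
  intro g v hv
  rw [← (subrepLatticeMapOfNormal ρ hN g).map_sSup_atoms]
  exact Submodule.mem_map_of_mem hv

theorem isSemisimpleRep_comp_subtype_of_normal [FiniteDimensional k V] (hN : N.Normal)
    (h : IsSemisimpleRep ρ) : IsSemisimpleRep (ρ.comp N.subtype) := by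
  have := CompleteLattice.isCompactlyGenerated_of_wellFoundedGT
    (α := subrepLattice (ρ.comp N.subtype))
  rw [isSemisimpleRep_iff_complementedLattice]
  apply complementedLattice_of_isComplemented_sSup_atoms
  obtain ⟨C, hC, hcompl⟩ := h _ (isSubrep_sSup_atoms_of_normal ρ hN)
  exact ⟨⟨C, fun n => hC n⟩, CompleteSublattice.isCompl_iff.mpr hcompl⟩

end Group

/-- For a finite-dimensional representation `V` of `G` over a field `k`: if `char k = 0`
and the restriction of `V` to a finite-index subgroup `N ≤ G` is semisimple then `V` is
semisimple; conversely (Clifford's theorem direction), if `V` is semisimple then its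
restriction to any finite-index normal subgroup `N` is semisimple. -/
theorem semisimple_iff_restriction_finiteIndex {k G V : Type*} [Field k]
    [Group G] [AddCommGroup V] [Module k V] [FiniteDimensional k V]
    (ρ : Representation k G V) :
    (∀ N : Subgroup G, N.FiniteIndex → CharZero k →
      IsSemisimpleRep (ρ.comp N.subtype) → IsSemisimpleRep ρ) ∧
    (∀ N : Subgroup G, N.FiniteIndex → N.Normal →
      IsSemisimpleRep ρ → IsSemisimpleRep (ρ.comp N.subtype)) :=
  ⟨fun _ hN _ h => isSemisimpleRep_of_comp_subtype ρ (Nat.cast_ne_zero.mpr hN.index_ne_zero) h,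
    fun _ _ hN h => isSemisimpleRep_comp_subtype_of_normal ρ hN h⟩
end
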